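/- Let k \ge 6, m = (k + \sqrt{k^2 + 1/27})^{1/6}, y_0 = m^2 - 1/(3m^2), and F_k(y) = (2y^2 - 4y + 3)/\sqrt{y(4y^4 - 12y^3 + 9y^2 + 10ky - 12k)}. Then F_k(y_0) < 2/(3m) < (2/3)(2k)^{-1/6}. -/

import Mathlib

noncomputable def Fk (k : ℕ) (y : ℝ) : ℝ :=
  (2 * y ^ 2 - 4 * y + 3) /
    Real.sqrt (y * (4 * y ^ 4 - 12 * y ^ 3 + 9 * y ^ 2 + 10 * k * y - 12 * k))

/-!
Put `y₀ = m² - 1/(3m²)`. Since `m⁶` is the positive root of `t² - 2kt - 1/27`, Cardano's formula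
shows that `y₀` is the real root of `y³ + y = 2k`; in particular `y₀ ≥ 2`. Eliminating `k` with this
relation, the radicand of `F_k(y₀)` factors as `y₀² (9y₀³ - 18y₀² + 14y₀ - 6)`, so `F_k(y₀) < 2/(3m)`
becomes a polynomial inequality in `y₀` once `m²` is bounded by `y₀ + 1/(3y₀)`, which holds
because `m² - y₀ = 1/(3m²)` and `m² > y₀`. The second bound is
`m⁶ > 2k`.
-/

open Real

lemma sq_eq_of_eq_add_sqrt {a b t : ℝ} (hab : 0 ≤ a ^ 2 + b) (ht : t = a + √(a ^ 2 + b)) :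
    t ^ 2 = 2 * a * t + b := by
  have := sq_sqrt hab
  rw [ht]
  linear_combination this

lemma cardano_cubic {c m : ℝ} (hm : m ≠ 0) (h : (m ^ 6) ^ 2 = c * m ^ 6 + 1 / 27) :
    (m ^ 2 - 1 / (3 * m ^ 2)) ^ 3 + (m ^ 2 - 1 / (3 * m ^ 2)) = c := by
  field_simp
  linear_combination 27 * h

lemma two_le_of_cubic {y c : ℝ} (hc : 10 ≤ c) (hy : y ^ 3 + y = c) : 2 ≤ y := by
  nlinarith [sq_nonneg (y + 1)]

lemma lt_sub_one_div_add_one_div {u : ℝ} (hu : 0 < u) (hy : 0 < u - 1 / (3 * u)) :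
    u < (u - 1 / (3 * u)) + 1 / (3 * (u - 1 / (3 * u))) := by
  have : 1 / (3 * u) < 1 / (3 * (u - 1 / (3 * u))) := by
    gcongr
    linarith [show 0 < 1 / (3 * u) by positivity]
  linarith

lemma Fk_eq_of_cubic {k : ℕ} {y : ℝ} (hy : 0 ≤ y) (h : y ^ 3 + y = 2 * k) :
    Fk k y = (2 * y ^ 2 - 4 * y + 3) / (y * √(9 * y ^ 3 - 18 * y ^ 2 + 14 * y - 6)) := by
  have hrad : y * (4 * y ^ 4 - 12 * y ^ 3 + 9 * y ^ 2 + 10 * k * y - 12 * k)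
      = y ^ 2 * (9 * y ^ 3 - 18 * y ^ 2 + 14 * y - 6) := by
    linear_combination (6 * y - 5 * y ^ 2) * h
  rw [Fk, hrad, sqrt_mul (sq_nonneg y), sqrt_sq hy]

lemma poly_le_of_two_le {y : ℝ} (hy : 2 ≤ y) :
    (9 * y ^ 2 + 3) * (2 * y ^ 2 - 4 * y + 3) ^ 2
      ≤ 4 * y ^ 3 * (9 * y ^ 3 - 18 * y ^ 2 + 14 * y - 6) := by
  obtain ⟨t, ht, rfl⟩ : ∃ t, 0 ≤ t ∧ y = t + 2 := ⟨y - 2, by linarith, by ring⟩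
  nlinarith [pow_nonneg ht 2, pow_nonneg ht 3, pow_nonneg ht 4, pow_nonneg ht 5]

lemma Fk_lt_of_cubic {k : ℕ} {y m : ℝ} (hy : 2 ≤ y) (h : y ^ 3 + y = 2 * k) (hm : 0 < m)
    (hmy : m ^ 2 < y + 1 / (3 * y)) : Fk k y < 2 / (3 * m) := by
  set N := 2 * y ^ 2 - 4 * y + 3
  set Q := 9 * y ^ 3 - 18 * y ^ 2 + 14 * y - 6
  have hy0 : 0 < y := by linarith
  have hN : 0 < N := by nlinarith [sq_nonneg (y - 1)]
  have hQ : 0 < Q := by nlinarith [mul_nonneg (sq_nonneg y) (sub_nonneg.mpr hy)]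
  have hsq : (3 * m * N) ^ 2 < (2 * y * √Q) ^ 2 := by
    rw [mul_pow (2 * y), sq_sqrt hQ.le]
    have hmy' : 3 * y * m ^ 2 < 3 * y ^ 2 + 1 := by
      have := mul_lt_mul_of_pos_left hmy (by positivity : 0 < 3 * y)
      field_simp at this
      linarith
    nlinarith [poly_le_of_two_le hy, mul_lt_mul_of_pos_left hmy' (by positivity : 0 < 3 * N ^ 2)]
  have hlt : 3 * m * N < 2 * y * √Q :=
    (pow_lt_pow_iff_left₀ (by positivity) (by positivity) two_ne_zero).mp hsq
  rw [Fk_eq_of_cubic hy0.le h, div_lt_div_iff₀ (by positivity) (by positivity)]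
  linarith

lemma inv_lt_rpow_neg_inv {x m : ℝ} {n : ℕ} (hx : 0 < x) (hm : 0 < m) (hn : n ≠ 0)
    (h : x < m ^ n) : m⁻¹ < x ^ (-(n : ℝ)⁻¹) := by
  rw [rpow_neg hx.le, inv_lt_inv₀ hm (by positivity),
    rpow_inv_lt_iff_of_pos hx.le hm.le (by positivity), rpow_natCast]
  exact h

theorem Fk_bound (k : ℕ) (hk : 6 ≤ k) :
    let m : ℝ := ((k : ℝ) + Real.sqrt ((k : ℝ) ^ 2 + 1 / 27)) ^ ((1 : ℝ) / 6)
    let y0 : ℝ := m ^ 2 - 1 / (3 * m ^ 2)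
    Fk k y0 < 2 / (3 * m) ∧
      2 / (3 * m) < 2 / 3 * (2 * (k : ℝ)) ^ (-(1 : ℝ) / 6) := by
  intro m y0
  have hk' : (6 : ℝ) ≤ k := by exact_mod_cast hk
  have hm6 : m ^ 6 = k + √((k : ℝ) ^ 2 + 1 / 27) := by
    have := rpow_inv_natCast_pow (n := 6) (x := k + √((k : ℝ) ^ 2 + 1 / 27)) (by positivity)
      (by norm_num)
    simpa [m] using this
  have hm : 0 < m := rpow_pos_of_pos (by positivity) _
  have hcubic : y0 ^ 3 + y0 = 2 * k :=
    cardano_cubic hm.ne' (sq_eq_of_eq_add_sqrt (by positivity) hm6)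
  have hy0 : 2 ≤ y0 := two_le_of_cubic (by linarith) hcubic
  refine ⟨Fk_lt_of_cubic hy0 hcubic hm
    (lt_sub_one_div_add_one_div (by positivity) (by linarith)), ?_⟩
  have hm6_gt : 2 * (k : ℝ) < m ^ 6 := by
    rw [hm6]
    linarith [lt_sqrt_of_sq_lt (show (k : ℝ) ^ 2 < k ^ 2 + 1 / 27 by linarith)]
  have hm_inv : m⁻¹ < (2 * (k : ℝ)) ^ (-((6 : ℕ) : ℝ)⁻¹) :=
    inv_lt_rpow_neg_inv (by positivity) hm (by norm_num) hm6_gt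
  calc 2 / (3 * m) = 2 / 3 * m⁻¹ := by ring
    _ < 2 / 3 * (2 * (k : ℝ)) ^ (-(1 : ℝ) / 6) := by
      rw [show -(1 : ℝ) / 6 = -((6 : ℕ) : ℝ)⁻¹ by norm_num]
      gcongr
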